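/- arXiv:2011.13876 — 3 statements merged into one kernel-verified Lean document; each statement's English description precedes it below -/
import Mathlib

section
/- For every n ≥ 2, every positive integer m, and all indices 1 ≤ i < j ≤ n, the m-th power A_{i,j}^m of the pure braid generator A_{i,j} = σ_{j−1}σ_{j−2}⋯σ_{i+1}σ_i^2σ_{i+1}^{−1}⋯σ_{j−2}^{−1}σ_{j−1}^{−1} lies in the level 2m congruence subgroup B_n[2m]. -/
open Matrix

/-- The braid relations on `m` generators `σ_1, …, σ_m` (0-indexed by `Fin m`). -/
def braidRels (m : ℕ) : Set (FreeGroup (Fin m)) :=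
  {r | (∃ i j : Fin m, (i : ℕ) + 1 = (j : ℕ) ∧
          r = FreeGroup.of i * FreeGroup.of j * FreeGroup.of i *
              (FreeGroup.of j * FreeGroup.of i * FreeGroup.of j)⁻¹) ∨
       (∃ i j : Fin m, (i : ℕ) + 2 ≤ (j : ℕ) ∧
          r = FreeGroup.of i * FreeGroup.of j * (FreeGroup.of j * FreeGroup.of i)⁻¹)}

/-- The braid group on `n` strands, presented on generators `σ_1, …, σ_{n-1}`. -/
def BraidGroup (n : ℕ) : Type := PresentedGroup (braidRels (n - 1))

instance (n : ℕ) : Group (BraidGroup n) :=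
  inferInstanceAs (Group (PresentedGroup (braidRels (n - 1))))

/-- The generator `σ_{k+1}` (in 1-indexed notation) of the braid group. -/
def braidGen (n : ℕ) (k : Fin (n - 1)) : BraidGroup n := PresentedGroup.of k

/-- The matrix of the generator `σ_{k+1}` under the reduced integral Burau representation. -/
def burauMatrix (n : ℕ) (k : Fin (n - 1)) : Matrix (Fin (n - 1)) (Fin (n - 1)) ℤ :=
  Matrix.of fun a b =>
    if a = b then 1
    else if (a : ℕ) + 1 = (k : ℕ) ∧ b = k then -1
    else if (a : ℕ) = (k : ℕ) + 1 ∧ b = k then 1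
    else 0

/-- `ρ` is the reduced integral Burau representation iff it takes the prescribed
values on the generators. -/
def IsBurau (n : ℕ) (ρ : BraidGroup n →* GL (Fin (n - 1)) ℤ) : Prop :=
  ∀ k : Fin (n - 1),
    (ρ (braidGen n k) : Matrix (Fin (n - 1)) (Fin (n - 1)) ℤ) = burauMatrix n k

/-- The level `ℓ` congruence subgroup `B_n[ℓ]`: the kernel of the composition of the
reduced integral Burau representation with entrywise reduction mod `ℓ`. -/
def congSubgroup (n : ℕ) (ρ : BraidGroup n →* GL (Fin (n - 1)) ℤ) (ℓ : ℕ) :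
    Subgroup (BraidGroup n) :=
  ((Matrix.GeneralLinearGroup.map (Int.castRingHom (ZMod ℓ))).comp ρ).ker

instance (n : ℕ) (ρ : BraidGroup n →* GL (Fin (n - 1)) ℤ) (ℓ : ℕ) :
    (congSubgroup n ρ ℓ).Normal :=
  MonoidHom.normal_ker _

instance (n : ℕ) (ρ : BraidGroup n →* GL (Fin (n - 1)) ℤ) (ℓ : ℕ)
    (K : Subgroup (BraidGroup n)) : ((congSubgroup n ρ ℓ).subgroupOf K).Normal :=
  Subgroup.Normal.subgroupOf (MonoidHom.normal_ker _) K

/-- The generator `σ_i` in 1-indexed notation (junk value `1` out of range). -/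
def braidGen' (n : ℕ) (i : ℕ) : BraidGroup n :=
  if h : i - 1 < n - 1 then braidGen n ⟨i - 1, h⟩ else 1

/-- The product `σ_{j-1} σ_{j-2} ⋯ σ_{i+1}` (1-indexed). -/
def pureConj (n : ℕ) (i j : ℕ) : BraidGroup n :=
  (((List.range (j - 1 - i)).map fun t => braidGen' n (j - 1 - t)).prod)

/-- The pure braid generator
`A_{i,j} = σ_{j-1} σ_{j-2} ⋯ σ_{i+1} σ_i² σ_{i+1}⁻¹ ⋯ σ_{j-2}⁻¹ σ_{j-1}⁻¹` (1-indexed). -/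
def pureGen (n : ℕ) (i j : ℕ) : BraidGroup n :=
  pureConj n i j * braidGen' n i ^ 2 * (pureConj n i j)⁻¹

lemma pow_of_sq_eq_zero {R : Type*} [CommRing R] {d : Type*} [Fintype d] [DecidableEq d]
    (M : Matrix d d R) (h : (M - 1) * (M - 1) = 0) (k : ℕ) :
    M ^ k = 1 + k • (M - 1) := by
  set N := M - 1 with hN
  have hMN : M = 1 + N := by rw [hN]; abel
  induction k with
  | zero => simp
  | succ k ih =>
    calc M ^ (k + 1) = (1 + k • N) * (1 + N) := by rw [pow_succ, ih, ← hMN]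
      _ = 1 + N + k • N + k • (N * N) := by
          simp only [mul_add, add_mul, one_mul, mul_one, smul_mul_assoc]; abel
      _ = 1 + (k + 1) • N := by rw [h, smul_zero, add_zero, succ_nsmul]; abel

lemma burau_sub_one_sq (n : ℕ) (k : Fin (n - 1)) :
    (burauMatrix n k - 1) * (burauMatrix n k - 1) = 0 := by
  ext a c
  simp only [Matrix.mul_apply, Matrix.zero_apply, Matrix.sub_apply, Matrix.one_apply,
    burauMatrix, Matrix.of_apply]
  apply Finset.sum_eq_zero
  intro b _
  split_ifs <;> simp_all

/-- For every `n ≥ 2`, every positive integer `m`, and all indices `1 ≤ i < j ≤ n`,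
the `m`-th power `A_{i,j}^m` of the pure braid generator `A_{i,j}` lies in the
level `2m` congruence subgroup `B_n[2m]`. -/
theorem pureGen_pow_mem_congSubgroup (n : ℕ) (hn : 2 ≤ n) (m : ℕ) (hm : 0 < m)
    (i j : ℕ) (hi : 1 ≤ i) (hij : i < j) (hj : j ≤ n)
    (ρ : BraidGroup n →* GL (Fin (n - 1)) ℤ) (hρ : IsBurau n ρ) :
    pureGen n i j ^ m ∈ congSubgroup n ρ (2 * m) := by
  have hlt : i - 1 < n - 1 := by omega
  set k : Fin (n - 1) := ⟨i - 1, hlt⟩ with hk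
  have hs : braidGen' n i = braidGen n k := by rw [braidGen', dif_pos hlt]
  set φ : Matrix (Fin (n-1)) (Fin (n-1)) ℤ →+* Matrix (Fin (n-1)) (Fin (n-1)) (ZMod (2 * m)) :=
    (Int.castRingHom (ZMod (2 * m))).mapMatrix with hφ
  set F := (Matrix.GeneralLinearGroup.map (n := Fin (n-1)) (Int.castRingHom (ZMod (2 * m)))).comp ρ with hF
  show F (pureGen n i j ^ m) = 1
  have key : F (braidGen' n i) ^ (2 * m) = 1 := by
    apply Units.ext
    rw [Units.val_pow_eq_pow_val, Units.val_one]
    have hmat : (F (braidGen' n i) : Matrix (Fin (n-1)) (Fin (n-1)) (ZMod (2 * m)))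
        = φ (burauMatrix n k) := by
      rw [hF, hs]
      show ((Units.map φ.toMonoidHom (ρ (braidGen n k))) :
        Matrix (Fin (n-1)) (Fin (n-1)) (ZMod (2 * m))) = _
      rw [Units.coe_map]
      simp only [RingHom.toMonoidHom_eq_coe, MonoidHom.coe_coe]
      rw [hρ k]
    rw [hmat]
    set M : Matrix (Fin (n-1)) (Fin (n-1)) (ZMod (2 * m)) := φ (burauMatrix n k) with hM
    have hsq : (M - 1) * (M - 1) = 0 := by
      calc (M - 1) * (M - 1)
          = φ ((burauMatrix n k - 1) * (burauMatrix n k - 1)) := by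
            rw [_root_.map_mul, map_sub, _root_.map_one, hM]
        _ = 0 := by rw [burau_sub_one_sq, map_zero]
    rw [pow_of_sq_eq_zero M hsq (2 * m)]
    have hz : ((2 * m : ℕ) : ZMod (2 * m)) = 0 := ZMod.natCast_self _
    rw [← Nat.cast_smul_eq_nsmul (ZMod (2 * m)), hz, zero_smul, add_zero]
  rw [map_pow, pureGen, _root_.map_mul, _root_.map_mul, map_inv, conj_pow, map_pow,
    ← pow_mul, key, mul_one, mul_inv_cancel]
end

section
/- For every n ≥ 2 and every odd positive integer ℓ, the kernel of the restriction to B_n[2ℓ] of the mod 2 abelianization map of B_n[2] equals B_n[4ℓ]; that is, B_n[4] ∩ B_n[2ℓ] = B_n[4ℓ]. -/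
open Matrix

private lemma mem_congSubgroup_iff {N : ℕ} (ρ' : GL (Fin N) ℤ) (m : ℕ) :
    ((Matrix.GeneralLinearGroup.map (Int.castRingHom (ZMod m))) ρ' = 1) ↔
      ∀ i j, (m : ℤ) ∣ ((ρ' : Matrix (Fin N) (Fin N) ℤ) i j
        - (1 : Matrix (Fin N) (Fin N) ℤ) i j) := by
  rw [Units.ext_iff, ← Matrix.ext_iff]
  refine forall₂_congr fun i j => ?_
  rw [Matrix.GeneralLinearGroup.map_apply]
  have h1 : ((1 : GL (Fin N) (ZMod m)) : Matrix (Fin N) (Fin N) (ZMod m)) i j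
      = (((1 : Matrix (Fin N) (Fin N) ℤ) i j : ℤ) : ZMod m) := by
    simp [Matrix.one_apply, apply_ite (fun x : ℤ => (x : ZMod m))]
  show (((ρ' : Matrix (Fin N) (Fin N) ℤ) i j : ℤ) : ZMod m) = _ ↔ _
  rw [h1, ZMod.intCast_eq_intCast_iff, Int.modEq_iff_dvd, dvd_sub_comm]

/-- For every `n ≥ 2` and every odd positive integer `ℓ`,
`B_n[4] ∩ B_n[2ℓ] = B_n[4ℓ]`. -/
theorem congSubgroup_four_inf (n : ℕ) (hn : 2 ≤ n) (ℓ : ℕ) (hℓ : 0 < ℓ)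
    (hodd : Odd ℓ)
    (ρ : BraidGroup n →* GL (Fin (n - 1)) ℤ) (hρ : IsBurau n ρ) :
    congSubgroup n ρ 4 ⊓ congSubgroup n ρ (2 * ℓ) = congSubgroup n ρ (4 * ℓ) := by
  ext g
  simp only [congSubgroup, MonoidHom.mem_ker, MonoidHom.comp_apply, Subgroup.mem_inf,
    mem_congSubgroup_iff]
  push_cast
  have hc : IsCoprime (4 : ℤ) (ℓ : ℤ) := by
    rw [Int.isCoprime_iff_gcd_eq_one]
    have h2 : Nat.Coprime 2 ℓ := Nat.coprime_two_left.2 hodd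
    simpa [Int.gcd] using (h2.mul h2 : Nat.Coprime (2 * 2) ℓ)
  constructor
  · rintro ⟨h4, h2⟩ i j
    exact hc.mul_dvd (h4 i j) ((dvd_mul_left (ℓ : ℤ) 2).trans (h2 i j))
  · intro h
    exact ⟨fun i j => (dvd_mul_right (4 : ℤ) (ℓ : ℤ)).trans (h i j),
      fun i j => (Dvd.intro 2 (by ring)).trans (h i j)⟩
end

section
/- For every n ≥ 2 of the form n = 2g+1, there exists an invertible integral (n−1)×(n−1) matrix Q and a nondegenerate alternating integral bilinear form J on ℤ^{2g} such that Q ρ(β) Q^{−1} preserves J for every β ∈ B_n; in particular, the reduced integral Burau representation of B_{2g+1} is conjugate in GL(2g,ℚ) to a representation with image in Sp(2g,ℤ). -/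
open Matrix

section Aux

/-- The invariant skew form: `J i j = 1` if `i` even, `j` odd, `i < j`. -/
def symJ (m : ℕ) : Matrix (Fin m) (Fin m) ℤ :=
  Matrix.of fun i j =>
    if (i : ℕ) % 2 = 0 ∧ (j : ℕ) % 2 = 1 ∧ (i : ℕ) < (j : ℕ) then 1
    else if (j : ℕ) % 2 = 0 ∧ (i : ℕ) % 2 = 1 ∧ (j : ℕ) < (i : ℕ) then -1
    else 0

def wvec (m : ℕ) (k : Fin m) : Fin m → ℤ := fun t =>
  if (t : ℕ) = (k : ℕ) + 1 then 1 else if (t : ℕ) + 1 = (k : ℕ) then -1 else 0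

def uvec (m : ℕ) (k : Fin m) : Fin m → ℤ := fun t => if t = k then 1 else 0

lemma symJ_transpose (m : ℕ) : (symJ m)ᵀ = -(symJ m) := by
  ext i j
  simp only [symJ, Matrix.transpose_apply, Matrix.neg_apply, Matrix.of_apply]
  split_ifs <;> first | ring1 | (exfalso; omega)

lemma sum_pick₁ {m : ℕ} (f : Fin m → ℤ) (c : ℕ) :
    ∑ t : Fin m, (if (t : ℕ) = c + 1 then f t else 0)
      = if h : c + 1 < m then f ⟨c + 1, h⟩ else 0 := by
  split_ifs with h
  · have he : ∀ t : Fin m, (if (t : ℕ) = c + 1 then f t else 0)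
        = if t = ⟨c + 1, h⟩ then f t else 0 := by
      intro t
      have hiff : ((t : ℕ) = c + 1) ↔ (t = ⟨c + 1, h⟩) := by
        rw [Fin.ext_iff]
      simp only [hiff]
    rw [Finset.sum_congr rfl fun t _ => he t]
    simp [Finset.sum_ite_eq']
  · apply Finset.sum_eq_zero
    intro t _
    rw [if_neg]
    have := t.isLt
    omega

lemma sum_pick₂ {m : ℕ} (f : Fin m → ℤ) (c : ℕ) (hc : 0 < c) :
    ∑ t : Fin m, (if (t : ℕ) + 1 = c then f t else 0)
      = if h : c - 1 < m then f ⟨c - 1, h⟩ else 0 := by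
  split_ifs with h
  · have he : ∀ t : Fin m, (if (t : ℕ) + 1 = c then f t else 0)
        = if t = ⟨c - 1, h⟩ then f t else 0 := by
      intro t
      have hiff : ((t : ℕ) + 1 = c) ↔ (t = ⟨c - 1, h⟩) := by
        rw [Fin.ext_iff]
        have hv : ((⟨c - 1, h⟩ : Fin m) : ℕ) = c - 1 := rfl
        rw [hv]
        omega
      simp only [hiff]
    rw [Finset.sum_congr rfl fun t _ => he t]
    simp [Finset.sum_ite_eq']
  · apply Finset.sum_eq_zero
    intro t _
    rw [if_neg]
    have := t.isLt
    omega

/-- The key computation: `J *ᵥ w_k = u_k` (entrywise). -/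
lemma key {g : ℕ} (k i : Fin (2 * g)) :
    ∑ t, symJ (2 * g) i t * wvec (2 * g) k t = uvec (2 * g) k i := by
  have hi := i.isLt
  have hk := k.isLt
  have hsplit : ∀ t : Fin (2 * g), symJ (2 * g) i t * wvec (2 * g) k t
      = (if (t : ℕ) = (k : ℕ) + 1 then symJ (2 * g) i t else 0)
        + (if (t : ℕ) + 1 = (k : ℕ) then -(symJ (2 * g) i t) else 0) := by
    intro t
    unfold wvec
    split_ifs <;> first | ring1 | (exfalso; omega)
  rw [Finset.sum_congr rfl fun t _ => hsplit t, Finset.sum_add_distrib]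
  rw [sum_pick₁ (fun t => symJ (2 * g) i t) (k : ℕ)]
  rcases Nat.eq_zero_or_pos (k : ℕ) with hk0 | hk0
  · have h2 : ∑ t : Fin (2 * g), (if (t : ℕ) + 1 = (k : ℕ)
        then -(symJ (2 * g) i t) else 0) = 0 := by
      apply Finset.sum_eq_zero
      intro t _
      rw [if_neg]
      omega
    rw [h2, add_zero]
    simp only [symJ, uvec, Matrix.of_apply, Fin.ext_iff, Fin.val_mk]
    split_ifs <;> omega
  · rw [sum_pick₂ (fun t => -(symJ (2 * g) i t)) (k : ℕ) hk0]
    simp only [symJ, uvec, Matrix.of_apply, Fin.ext_iff, Fin.val_mk]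
    split_ifs <;> omega

lemma symJ_mulVec {g : ℕ} (k : Fin (2 * g)) :
    (symJ (2 * g)) *ᵥ (wvec (2 * g) k) = uvec (2 * g) k := by
  funext i
  simpa [Matrix.mulVec, dotProduct] using key k i

lemma symJ_det_ne_zero {g : ℕ} : (symJ (2 * g)).det ≠ 0 := by
  have hJK : symJ (2 * g) * Matrix.of (fun t j => wvec (2 * g) j t) = 1 := by
    ext i j
    rw [Matrix.mul_apply]
    have h1 : ∑ t, symJ (2 * g) i t * (Matrix.of (fun t j => wvec (2 * g) j t)) t j
        = uvec (2 * g) j i := by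
      simpa using key j i
    rw [h1]
    simp only [uvec, Matrix.one_apply]
  have hdet : (symJ (2 * g)).det * (Matrix.of (fun t j => wvec (2 * g) j t)).det = 1 := by
    rw [← Matrix.det_mul, hJK, Matrix.det_one]
  intro h0
  rw [h0, zero_mul] at hdet
  exact zero_ne_one hdet

lemma mul_vmv {m : ℕ} (A : Matrix (Fin m) (Fin m) ℤ) (w u : Fin m → ℤ) :
    A * Matrix.vecMulVec w u = Matrix.vecMulVec (A *ᵥ w) u := by
  ext i j
  simp only [Matrix.mul_apply, Matrix.vecMulVec_apply, Matrix.mulVec,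
    dotProduct]
  rw [Finset.sum_mul]
  exact Finset.sum_congr rfl fun t _ => by ring

lemma vmv_mul {m : ℕ} (A : Matrix (Fin m) (Fin m) ℤ) (u w : Fin m → ℤ) :
    Matrix.vecMulVec u w * A = Matrix.vecMulVec u (w ᵥ* A) := by
  ext i j
  simp only [Matrix.mul_apply, Matrix.vecMulVec_apply, Matrix.vecMul,
    dotProduct]
  rw [Finset.mul_sum]
  exact Finset.sum_congr rfl fun t _ => by ring

lemma vmv_transpose {m : ℕ} (w u : Fin m → ℤ) :
    (Matrix.vecMulVec w u)ᵀ = Matrix.vecMulVec u w := by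
  ext i j
  simp [Matrix.vecMulVec_apply, mul_comm]

/-- Abstract symplectic invariance for a transvection-like matrix `1 + w uᵀ`. -/
lemma sympl {m : ℕ} (J : Matrix (Fin m) (Fin m) ℤ) (w u : Fin m → ℤ)
    (hskew : Jᵀ = -J) (h1 : J *ᵥ w = u)
    (h3 : u ᵥ* Matrix.vecMulVec w u = 0) :
    (1 + Matrix.vecMulVec w u)ᵀ * J * (1 + Matrix.vecMulVec w u) = J := by
  have h2 : w ᵥ* J = -u := by
    rw [← Matrix.mulVec_transpose, hskew, Matrix.neg_mulVec, h1]
  have hT : (1 + Matrix.vecMulVec w u)ᵀ = 1 + Matrix.vecMulVec u w := by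
    rw [Matrix.transpose_add, Matrix.transpose_one, vmv_transpose]
  rw [hT]
  have hJQ : J * Matrix.vecMulVec w u = Matrix.vecMulVec u u := by
    rw [mul_vmv, h1]
  have hPJ : Matrix.vecMulVec u w * J = Matrix.vecMulVec u (-u) := by
    rw [vmv_mul, h2]
  have hzero : Matrix.vecMulVec u (-u) * Matrix.vecMulVec w u = 0 := by
    rw [vmv_mul, Matrix.neg_vecMul, h3, neg_zero]
    ext i j
    simp [Matrix.vecMulVec_apply]
  have hneg : Matrix.vecMulVec u (-u) = -(Matrix.vecMulVec u u) := by
    ext i j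
    simp [Matrix.vecMulVec_apply]
  calc (1 + Matrix.vecMulVec u w) * J * (1 + Matrix.vecMulVec w u)
      = J + J * Matrix.vecMulVec w u + (Matrix.vecMulVec u w * J
          + (Matrix.vecMulVec u w * J) * Matrix.vecMulVec w u) := by noncomm_ring
    _ = J := by
        rw [hJQ, hPJ, hzero, add_zero, hneg]
        abel

lemma u_vmul_Q {g : ℕ} (k : Fin (2 * g)) :
    uvec (2 * g) k ᵥ* Matrix.vecMulVec (wvec (2 * g) k) (uvec (2 * g) k) = 0 := by
  funext j
  simp only [Matrix.vecMul, dotProduct, Matrix.vecMulVec_apply, Pi.zero_apply]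
  have hterm : ∀ t : Fin (2 * g),
      uvec (2 * g) k t * (wvec (2 * g) k t * uvec (2 * g) k j)
        = if t = k then wvec (2 * g) k t * uvec (2 * g) k j else 0 := by
    intro t
    unfold uvec
    split_ifs <;> ring1
  rw [Finset.sum_congr rfl fun t _ => hterm t, Finset.sum_ite_eq' Finset.univ]
  simp [wvec]

lemma burau_eq {g : ℕ} (k : Fin (2 * g + 1 - 1)) :
    burauMatrix (2 * g + 1) k
      = 1 + Matrix.vecMulVec (wvec (2 * g + 1 - 1) k) (uvec (2 * g + 1 - 1) k) := by
  ext a b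
  simp only [burauMatrix, Matrix.of_apply, Matrix.add_apply, Matrix.one_apply,
    Matrix.vecMulVec_apply, wvec, uvec, Fin.ext_iff]
  split_ifs <;> first | ring1 | (exfalso; omega)

end Aux

/-- For every `n ≥ 2` of the form `n = 2g+1`, there exists an invertible integral
`(n-1) × (n-1)` matrix `Q` and a nondegenerate alternating integral bilinear form
`J` on `ℤ^{2g}` such that `Q ρ(β) Q⁻¹` preserves `J` for every `β ∈ B_n`; in
particular the reduced integral Burau representation of `B_{2g+1}` is conjugate to
a representation with image in `Sp(2g, ℤ)`. -/
theorem burau_conjugate_symplectic (g : ℕ) (hg : 1 ≤ g)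
    (ρ : BraidGroup (2 * g + 1) →* GL (Fin (2 * g)) ℤ)
    (hρ : IsBurau (2 * g + 1) ρ) :
    ∃ (Q J : Matrix (Fin (2 * g)) (Fin (2 * g)) ℤ),
      IsUnit Q.det ∧ Jᵀ = -J ∧ J.det ≠ 0 ∧
        ∀ β : BraidGroup (2 * g + 1),
          (Q * (ρ β : Matrix (Fin (2 * g)) (Fin (2 * g)) ℤ) * Q⁻¹)ᵀ * J *
              (Q * (ρ β : Matrix (Fin (2 * g)) (Fin (2 * g)) ℤ) * Q⁻¹) = J := by
  refine ⟨1, symJ (2 * g), by simp, symJ_transpose (2 * g), symJ_det_ne_zero, ?_⟩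
  have hmat : ∀ k : Fin (2 * g),
      (ρ (braidGen (2 * g + 1) k) : Matrix (Fin (2 * g)) (Fin (2 * g)) ℤ)
        = 1 + Matrix.vecMulVec (wvec (2 * g) k) (uvec (2 * g) k) :=
    fun k => (hρ k).trans (burau_eq k)
  have main : ∀ β : BraidGroup (2 * g + 1),
      ((ρ β : Matrix (Fin (2 * g)) (Fin (2 * g)) ℤ))ᵀ * symJ (2 * g) *
        (ρ β : Matrix (Fin (2 * g)) (Fin (2 * g)) ℤ) = symJ (2 * g) := by
    let S : Subgroup (BraidGroup (2 * g + 1)) :=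
      { carrier := {β | ((ρ β : Matrix (Fin (2 * g)) (Fin (2 * g)) ℤ))ᵀ *
          symJ (2 * g) * (ρ β : Matrix (Fin (2 * g)) (Fin (2 * g)) ℤ) = symJ (2 * g)}
        one_mem' := by
          simp [Set.mem_setOf_eq, _root_.map_one, Matrix.GeneralLinearGroup.coe_one,
            Units.val_one]
        mul_mem' := by
          intro a b ha hb
          simp only [Set.mem_setOf_eq] at ha hb ⊢
          rw [_root_.map_mul, Units.val_mul, Matrix.transpose_mul]
          have h : ((ρ b : Matrix (Fin (2 * g)) (Fin (2 * g)) ℤ))ᵀ *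
              ((ρ a : Matrix (Fin (2 * g)) (Fin (2 * g)) ℤ))ᵀ * symJ (2 * g) *
              ((ρ a : Matrix (Fin (2 * g)) (Fin (2 * g)) ℤ) *
               (ρ b : Matrix (Fin (2 * g)) (Fin (2 * g)) ℤ))
              = ((ρ b : Matrix (Fin (2 * g)) (Fin (2 * g)) ℤ))ᵀ *
                (((ρ a : Matrix (Fin (2 * g)) (Fin (2 * g)) ℤ))ᵀ * symJ (2 * g) *
                 (ρ a : Matrix (Fin (2 * g)) (Fin (2 * g)) ℤ)) *
                (ρ b : Matrix (Fin (2 * g)) (Fin (2 * g)) ℤ) := by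
            noncomm_ring
          rw [h, ha, hb]
        inv_mem' := by
          intro a ha
          simp only [Set.mem_setOf_eq] at ha ⊢
          have hAN : (ρ a : Matrix (Fin (2 * g)) (Fin (2 * g)) ℤ) *
              (ρ a⁻¹ : Matrix (Fin (2 * g)) (Fin (2 * g)) ℤ) = 1 := by
            rw [← Units.val_mul, ← _root_.map_mul, mul_inv_cancel, _root_.map_one,
              Units.val_one]
          calc (ρ a⁻¹ : Matrix (Fin (2 * g)) (Fin (2 * g)) ℤ)ᵀ * symJ (2 * g) *
              (ρ a⁻¹ : Matrix (Fin (2 * g)) (Fin (2 * g)) ℤ)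
              = (ρ a⁻¹ : Matrix (Fin (2 * g)) (Fin (2 * g)) ℤ)ᵀ *
                ((ρ a : Matrix (Fin (2 * g)) (Fin (2 * g)) ℤ)ᵀ * symJ (2 * g) *
                 (ρ a : Matrix (Fin (2 * g)) (Fin (2 * g)) ℤ)) *
                (ρ a⁻¹ : Matrix (Fin (2 * g)) (Fin (2 * g)) ℤ) := by rw [ha]
            _ = ((ρ a : Matrix (Fin (2 * g)) (Fin (2 * g)) ℤ) *
                  (ρ a⁻¹ : Matrix (Fin (2 * g)) (Fin (2 * g)) ℤ))ᵀ * symJ (2 * g) *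
                ((ρ a : Matrix (Fin (2 * g)) (Fin (2 * g)) ℤ) *
                  (ρ a⁻¹ : Matrix (Fin (2 * g)) (Fin (2 * g)) ℤ)) := by
                rw [Matrix.transpose_mul]
                noncomm_ring
            _ = symJ (2 * g) := by
                rw [hAN, Matrix.transpose_one, one_mul, mul_one] }
    have hgen : ∀ k : Fin (2 * g), braidGen (2 * g + 1) k ∈ S := by
      intro k
      show ((ρ (braidGen (2 * g + 1) k) : Matrix (Fin (2 * g)) (Fin (2 * g)) ℤ))ᵀ *
        symJ (2 * g) * (ρ (braidGen (2 * g + 1) k) :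
          Matrix (Fin (2 * g)) (Fin (2 * g)) ℤ) = symJ (2 * g)
      rw [hmat k]
      exact sympl (symJ (2 * g)) _ _ (symJ_transpose (2 * g)) (symJ_mulVec k)
        (u_vmul_Q k)
    have hcl : Subgroup.closure (Set.range (braidGen (2 * g + 1))) = ⊤ :=
      PresentedGroup.closure_range_of (braidRels (2 * g + 1 - 1))
    intro β
    have hβ : β ∈ Subgroup.closure (Set.range (braidGen (2 * g + 1))) := by
      rw [hcl]; exact Subgroup.mem_top β
    have hsub : Set.range (braidGen (2 * g + 1)) ⊆ ↑S := by
      rintro x ⟨k, rfl⟩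
      exact hgen k
    exact (Subgroup.closure_le S).2 hsub hβ
  intro β
  simpa [inv_one] using main β
end
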